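/- (Corollary 2, diagonal.) Assume Σ_{s=1}^D p_{is} ≍ D. Then the uncorrected estimator G_ii^{(D)}/D = (1/D)·Σ_{s=1}^D Y_{is}² converges in probability to K_ii as D → ∞ if and only if lim_{D→∞} ( Σ_{s=1}^D p_{is} ) / D = 1. -/

import Mathlib

open MeasureTheory ProbabilityTheory Filter Finset Topology Real
open scoped NNReal ENNReal

lemma aux_integrable_pow_mul_exp {b : ℝ} (hb : 0 < b) (n : ℕ) :
    Integrable (fun x : ℝ => x ^ n * Real.exp (-b * x ^ 2)) := by
  have h := integrable_rpow_mul_exp_neg_mul_sq hb (s := (n : ℝ))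
    (lt_of_lt_of_le neg_one_lt_zero (Nat.cast_nonneg n))
  refine h.congr (Filter.Eventually.of_forall fun x => ?_)
  simp [Real.rpow_natCast]

lemma aux_integral_sq_mul_exp_neg_mul_sq {b : ℝ} (hb : 0 < b) :
    ∫ x : ℝ, x ^ 2 * Real.exp (-b * x ^ 2) = Real.sqrt (π / b) / (2 * b) := by
  have hb' : (2 : ℝ) * b ≠ 0 := by positivity
  have hu : ∀ x : ℝ, HasDerivAt (fun y : ℝ => y) ((fun _ : ℝ => (1:ℝ)) x) x :=
    fun x => hasDerivAt_id x
  have hv : ∀ x : ℝ, HasDerivAt (fun y : ℝ => -(2*b)⁻¹ * Real.exp (-b * y ^ 2))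
      ((fun y : ℝ => y * Real.exp (-b * y ^ 2)) x) x := by
    intro x
    have h1 : HasDerivAt (fun y : ℝ => -b * y ^ 2) (-b * (2 * x)) x := by
      simpa using (hasDerivAt_pow 2 x).const_mul (-b)
    have h2 := h1.exp.const_mul (-(2*b)⁻¹)
    refine h2.congr_deriv ?_
    simp only
    field_simp
  have huv' : Integrable ((fun y : ℝ => y) * fun y : ℝ => y * Real.exp (-b * y ^ 2)) := by
    have h := aux_integrable_pow_mul_exp hb 2
    refine h.congr (Filter.Eventually.of_forall fun x => ?_)
    simp [Pi.mul_apply]; ring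
  have hu'v : Integrable ((fun _ : ℝ => (1:ℝ)) * fun y : ℝ => -(2*b)⁻¹ * Real.exp (-b * y ^ 2)) := by
    have h := (integrable_exp_neg_mul_sq hb).const_mul (-(2*b)⁻¹)
    refine h.congr (Filter.Eventually.of_forall fun x => ?_)
    simp [Pi.mul_apply]
  have huv : Integrable ((fun y : ℝ => y) * fun y : ℝ => -(2*b)⁻¹ * Real.exp (-b * y ^ 2)) := by
    have h := (integrable_mul_exp_neg_mul_sq hb).const_mul (-(2*b)⁻¹)
    refine h.congr (Filter.Eventually.of_forall fun x => ?_)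
    simp [Pi.mul_apply]; ring
  have key := integral_mul_deriv_eq_deriv_mul_of_integrable (fun x _ => hu x) (fun x _ => hv x) huv' hu'v huv
  have hL : (∫ x : ℝ, x * (x * Real.exp (-b * x ^ 2))) = ∫ x : ℝ, x ^ 2 * Real.exp (-b * x ^ 2) := by
    congr 1; funext x; ring
  have hR : (∫ x : ℝ, (1:ℝ) * (-(2*b)⁻¹ * Real.exp (-b * x ^ 2)))
      = -(2*b)⁻¹ * Real.sqrt (π / b) := by
    simp only [one_mul]
    rw [integral_const_mul, integral_gaussian]
  rw [hL, hR] at key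
  rw [key]
  ring

lemma aux_gaussian_pdf_eq (v : ℝ≥0) (x : ℝ) :
    gaussianPDFReal 0 v x = (Real.sqrt (2 * π * v))⁻¹ * Real.exp (-(2 * (v:ℝ))⁻¹ * x ^ 2) := by
  rw [gaussianPDFReal]
  congr 1
  rw [sub_zero]
  ring

lemma aux_integral_pow_gaussian {v : ℝ≥0} (hv : v ≠ 0) (n : ℕ) :
    ∫ x, x ^ n ∂(gaussianReal 0 v)
      = ∫ x, gaussianPDFReal 0 v x * x ^ n := by
  rw [gaussianReal_of_var_ne_zero _ hv]
  have hmeas : Measurable fun x => (gaussianPDFReal 0 v x).toNNReal :=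
    (measurable_gaussianPDFReal 0 v).real_toNNReal
  have hpdf : gaussianPDF 0 v = fun x => ((gaussianPDFReal 0 v x).toNNReal : ℝ≥0∞) := by
    funext x; rfl
  rw [hpdf, integral_withDensity_eq_integral_smul hmeas]
  congr 1; funext x
  rw [NNReal.smul_def, Real.coe_toNNReal _ (gaussianPDFReal_nonneg 0 v x)]
  rfl

lemma aux_integrable_pow_gaussian {v : ℝ≥0} (hv : v ≠ 0) (n : ℕ) :
    Integrable (fun x : ℝ => x ^ n) (gaussianReal 0 v) := by
  rw [gaussianReal_of_var_ne_zero _ hv]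
  have hmeas : Measurable fun x => (gaussianPDFReal 0 v x).toNNReal :=
    (measurable_gaussianPDFReal 0 v).real_toNNReal
  have hpdf : gaussianPDF 0 v = fun x => ((gaussianPDFReal 0 v x).toNNReal : ℝ≥0∞) := by
    funext x; rfl
  rw [hpdf, integrable_withDensity_iff_integrable_smul hmeas]
  have hb : (0:ℝ) < (2 * (v:ℝ))⁻¹ := by
    have : (0:ℝ) < (v:ℝ) := lt_of_le_of_ne (v.coe_nonneg) (by exact_mod_cast hv.symm)
    positivity
  have h := (aux_integrable_pow_mul_exp hb n).const_mul (Real.sqrt (2 * π * v))⁻¹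
  refine h.congr (Filter.Eventually.of_forall fun x => ?_)
  show _ = (gaussianPDFReal 0 v x).toNNReal • x ^ n
  rw [NNReal.smul_def, Real.coe_toNNReal _ (gaussianPDFReal_nonneg 0 v x),
    aux_gaussian_pdf_eq v, smul_eq_mul]
  ring

lemma aux_integral_sq_gaussian {v : ℝ≥0} (hv : v ≠ 0) :
    ∫ x, x ^ 2 ∂(gaussianReal 0 v) = (v : ℝ) := by
  have hv' : (0:ℝ) < (v:ℝ) := lt_of_le_of_ne (v.coe_nonneg) (by exact_mod_cast hv.symm)
  have hb : (0:ℝ) < (2 * (v:ℝ))⁻¹ := by positivity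
  have hX : (0:ℝ) < 2 * π * v := by positivity
  have hsq : Real.sqrt (2 * π * v) ≠ 0 := by
    rw [Real.sqrt_ne_zero' ]; exact hX
  rw [aux_integral_pow_gaussian hv 2]
  have h1 : (∫ x : ℝ, gaussianPDFReal 0 v x * x ^ 2)
      = (Real.sqrt (2 * π * v))⁻¹ * ∫ x : ℝ, x ^ 2 * Real.exp (-(2 * (v:ℝ))⁻¹ * x ^ 2) := by
    rw [← integral_const_mul]
    congr 1; funext x; rw [aux_gaussian_pdf_eq v]; ring
  rw [h1, aux_integral_sq_mul_exp_neg_mul_sq hb]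
  have h2 : π / ((2 * (v:ℝ))⁻¹) = 2 * π * v := by
    field_simp
  rw [h2]
  have h3 : (2 : ℝ) * (2 * (v:ℝ))⁻¹ = (v:ℝ)⁻¹ := by
    field_simp
  rw [h3]
  field_simp

/-- Corollary 2 (diagonal): under `∑_{s<D} p_is ≍ D`, the uncorrected estimator
`G_ii^{(D)}/D` converges in probability to `K_ii` iff `(∑_{s<D} p_is)/D → 1`. -/
theorem uncorrected_gram_diag_consistent_iff
    {Ω : Type*} [MeasurableSpace Ω] (μ : Measure Ω) [IsProbabilityMeasure μ]
    (Kii : ℝ) (hKii : 0 < Kii)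
    (pi : ℕ → ℝ) (hpi : ∀ s, 0 < pi s ∧ pi s ≤ 1)
    (Yt : ℕ → Ω → ℝ) (hYt : ∀ s, Measurable (Yt s))
    (hYtlaw : ∀ s, μ.map (Yt s) = gaussianReal 0 (Real.toNNReal Kii))
    (Hi : ℕ → Ω → ℝ) (hHi : ∀ s, Measurable (Hi s))
    (hHi01 : ∀ s ω, Hi s ω = 0 ∨ Hi s ω = 1)
    (hHiP : ∀ s, μ {ω | Hi s ω = 1} = ENNReal.ofReal (pi s))
    (hindep : iIndepFun (Sum.elim Hi Yt) μ)
    (Yi : ℕ → Ω → ℝ) (hYi : Yi = fun s ω => Hi s ω * Yt s ω)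
    (m M : ℝ) (hm : 0 < m) (hmM : m < M) (n₀ : ℕ)
    (hasymp : ∀ D > n₀, m < (∑ s ∈ range D, pi s) / D ∧
      (∑ s ∈ range D, pi s) / D < M)
 :
    (∀ ε > (0 : ℝ),
        Tendsto (fun D => μ {ω | ε < |(∑ s ∈ range D, (Yi s ω) ^ 2) / D - Kii|})
          atTop (𝓝 0)) ↔
      Tendsto (fun D : ℕ => (∑ s ∈ range D, pi s) / D) atTop (𝓝 1) := by
  have hvK : ((Real.toNNReal Kii : ℝ≥0) : ℝ) = Kii := Real.coe_toNNReal _ hKii.le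
  set v : ℝ≥0 := Real.toNNReal Kii with hvdef
  have hv0 : v ≠ 0 := by
    intro h
    rw [h] at hvK
    simp only [NNReal.coe_zero] at hvK
    exact hKii.ne' hvK.symm
  simp only [hYi]
  -- measurability
  have hmeasSum : ∀ i : ℕ ⊕ ℕ, Measurable (Sum.elim Hi Yt i) := by
    rintro (s|s)
    exacts [hHi s, hYt s]
  -- L² membership of Yt²
  have hmemYt2 : ∀ s, MemLp (fun ω => (Yt s ω) ^ 2) 2 μ := by
    intro s
    have hg : MemLp (fun x : ℝ => x ^ 2) 2 (gaussianReal 0 v) := by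
      refine (memLp_two_iff_integrable_sq
        (measurable_id.pow_const 2).aestronglyMeasurable).2 ?_
      refine (aux_integrable_pow_gaussian hv0 4).congr
        (Filter.Eventually.of_forall fun x => ?_)
      simp only [id_eq]
      ring
    have hg' : MemLp (fun x : ℝ => x ^ 2) 2 (μ.map (Yt s)) := by
      rw [hYtlaw s]; exact hg
    exact (memLp_map_measure_iff
      (measurable_id.pow_const 2).aestronglyMeasurable (hYt s).aemeasurable).1 hg'
  -- L² membership of Z s := (Hi s * Yt s)²
  have hmemZ : ∀ s, MemLp (fun ω => (Hi s ω * Yt s ω) ^ 2) 2 μ := by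
    intro s
    refine (hmemYt2 s).of_le
      (((hHi s).mul (hYt s)).pow_const 2).aestronglyMeasurable
      (Filter.Eventually.of_forall fun ω => ?_)
    rcases hHi01 s ω with h | h <;> simp [h, Real.norm_eq_abs, abs_nonneg] <;> positivity
  -- expectation of Z s
  have hEZ : ∀ s, (∫ ω, (Hi s ω * Yt s ω) ^ 2 ∂μ) = pi s * Kii := by
    intro s
    have hfun : (fun ω => (Hi s ω * Yt s ω) ^ 2)
        = (Hi s) * fun ω => (Yt s ω) ^ 2 := by
      funext ω
      rcases hHi01 s ω with h | h <;> simp [Pi.mul_apply, h] <;> ring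
    have hind : IndepFun (Hi s) (fun ω => (Yt s ω) ^ 2) μ := by
      have h0 : IndepFun (Hi s) (Yt s) μ :=
        hindep.indepFun (show (Sum.inl s : ℕ ⊕ ℕ) ≠ Sum.inr s by simp)
      exact h0.comp measurable_id (measurable_id.pow_const 2)
    have hintH : Integrable (Hi s) μ := by
      refine (integrable_const (1:ℝ)).mono' (hHi s).aestronglyMeasurable
        (Filter.Eventually.of_forall fun ω => ?_)
      rcases hHi01 s ω with h | h <;> simp [h]
    have hintY2 : Integrable (fun ω => (Yt s ω) ^ 2) μ :=
      (hmemYt2 s).integrable one_le_two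
    have hmul := hind.integral_mul_eq_mul_integral hintH.aestronglyMeasurable hintY2.aestronglyMeasurable
    have hEH : (∫ ω, Hi s ω ∂μ) = pi s := by
      have hset : MeasurableSet {ω | Hi s ω = 1} :=
        (hHi s) (measurableSet_singleton 1)
      have hHind : Hi s = Set.indicator {ω | Hi s ω = 1} (1 : Ω → ℝ) := by
        funext ω
        rcases hHi01 s ω with h | h <;>
          simp [Set.indicator_apply, Set.mem_setOf_eq, h]
      rw [hHind, integral_indicator_one hset, measureReal_def, hHiP s,
        ENNReal.toReal_ofReal (hpi s).1.le]
    have hEY2 : (∫ ω, (Yt s ω) ^ 2 ∂μ) = Kii := by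
      have h := integral_map (μ := μ) (hYt s).aemeasurable
        (f := fun x : ℝ => x ^ 2) (measurable_id.pow_const 2).aestronglyMeasurable
      rw [hYtlaw s] at h
      rw [← h, aux_integral_sq_gaussian hv0, hvK]
    calc (∫ ω, (Hi s ω * Yt s ω) ^ 2 ∂μ)
        = ∫ ω, ((Hi s) * fun ω => (Yt s ω) ^ 2) ω ∂μ := by rw [← hfun]
      _ = (∫ ω, Hi s ω ∂μ) * ∫ ω, (Yt s ω) ^ 2 ∂μ := hmul
      _ = pi s * Kii := by rw [hEH, hEY2]
  -- fourth moment constant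
  set C : ℝ := ∫ x, x ^ 4 ∂(gaussianReal 0 v) with hC
  have hC0 : 0 ≤ C := by
    rw [hC]
    exact integral_nonneg fun x => by positivity
  have hYt4int : ∀ s, Integrable (fun ω => (Yt s ω) ^ 4) μ := by
    intro s
    have h : Integrable (fun x : ℝ => x ^ 4) (μ.map (Yt s)) := by
      rw [hYtlaw s]; exact aux_integrable_pow_gaussian hv0 4
    exact (integrable_map_measure
      (measurable_id.pow_const 4).aestronglyMeasurable (hYt s).aemeasurable).1 h
  have hYt4 : ∀ s, (∫ ω, (Yt s ω) ^ 4 ∂μ) = C := by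
    intro s
    have h := integral_map (μ := μ) (hYt s).aemeasurable
      (f := fun x : ℝ => x ^ 4) (measurable_id.pow_const 4).aestronglyMeasurable
    rw [hYtlaw s] at h
    rw [hC]
    exact h.symm
  -- variance bound
  have hvar : ∀ s, variance (fun ω => (Hi s ω * Yt s ω) ^ 2) μ ≤ C := by
    intro s
    rw [variance_eq_sub (hmemZ s)]
    have hle : (μ[(fun ω => (Hi s ω * Yt s ω) ^ 2) ^ 2]) ≤ C := by
      rw [← hYt4 s]
      refine integral_mono (hmemZ s).integrable_sq (hYt4int s) fun ω => ?_
      rcases hHi01 s ω with h | h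
      · simp only [Pi.pow_apply, h, zero_mul]
        norm_num
        positivity
      · simp only [Pi.pow_apply, h, one_mul]
        exact le_of_eq (by ring)
    nlinarith [sq_nonneg (μ[fun ω => (Hi s ω * Yt s ω) ^ 2])]
  -- pairwise independence
  have hindepZ : ∀ s t : ℕ, s ≠ t →
      IndepFun (fun ω => (Hi s ω * Yt s ω) ^ 2) (fun ω => (Hi t ω * Yt t ω) ^ 2) μ := by
    intro s t hst
    have h := hindep.indepFun_prodMk_prodMk hmeasSum
      (Sum.inl s) (Sum.inr s) (Sum.inl t) (Sum.inr t)
      (by simp [hst]) (by simp) (by simp) (by simp [hst])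
    exact h.comp ((measurable_fst.mul measurable_snd).pow_const 2)
      ((measurable_fst.mul measurable_snd).pow_const 2)
  -- the key limit: concentration around Kii * (∑ p)/D
  have key : ∀ ε : ℝ, 0 < ε → Tendsto (fun D : ℕ =>
      μ {ω | ε < |(∑ s ∈ range D, (Hi s ω * Yt s ω) ^ 2) / D
        - Kii * ((∑ s ∈ range D, pi s) / D)|}) atTop (𝓝 0) := by
    intro ε hε
    have hbound : Tendsto (fun D : ℕ => ENNReal.ofReal (C / ε ^ 2 * (1 / (D:ℝ))))
        atTop (𝓝 0) := by
      have h0 : Tendsto (fun D : ℕ => C / ε ^ 2 * (1 / (D:ℝ))) atTop (𝓝 0) := by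
        simpa using tendsto_one_div_atTop_nhds_zero_nat.const_mul (C / ε ^ 2)
      simpa using ENNReal.tendsto_ofReal h0
    refine tendsto_of_tendsto_of_tendsto_of_le_of_le' tendsto_const_nhds hbound
      (Filter.Eventually.of_forall fun _ => zero_le) ?_
    filter_upwards [eventually_ge_atTop 1] with D hD
    have hD0 : (0:ℝ) < (D:ℝ) := by exact_mod_cast hD
    set X : Ω → ℝ := ∑ s ∈ range D, (fun ω => (Hi s ω * Yt s ω) ^ 2) with hX
    have hmemX : MemLp X 2 μ := memLp_finset_sum' _ fun i _ => hmemZ i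
    have hXapp : ∀ ω, X ω = ∑ s ∈ range D, (Hi s ω * Yt s ω) ^ 2 := by
      intro ω
      rw [hX, Finset.sum_apply]
    have hEX : (μ[X]) = (∑ s ∈ range D, pi s) * Kii := by
      calc (μ[X]) = ∫ ω, ∑ s ∈ range D, (Hi s ω * Yt s ω) ^ 2 ∂μ := by
            congr 1; funext ω; exact hXapp ω
        _ = ∑ s ∈ range D, ∫ ω, (Hi s ω * Yt s ω) ^ 2 ∂μ :=
            integral_finset_sum _ fun i _ => (hmemZ i).integrable one_le_two
        _ = ∑ s ∈ range D, pi s * Kii := by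
            exact Finset.sum_congr rfl fun i _ => hEZ i
        _ = (∑ s ∈ range D, pi s) * Kii := by rw [← Finset.sum_mul]
    have hVarX : variance X μ ≤ (D:ℝ) * C := by
      rw [hX, IndepFun.variance_sum (fun i _ => hmemZ i)
        (fun i _ j _ hij => hindepZ i j hij)]
      calc (∑ s ∈ range D, variance (fun ω => (Hi s ω * Yt s ω) ^ 2) μ)
          ≤ ∑ _s ∈ range D, C := Finset.sum_le_sum fun i _ => hvar i
        _ = (D:ℝ) * C := by simp [Finset.sum_const, card_range, nsmul_eq_mul]
    calc μ {ω | ε < |(∑ s ∈ range D, (Hi s ω * Yt s ω) ^ 2) / D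
            - Kii * ((∑ s ∈ range D, pi s) / D)|}
        ≤ μ {ω | ε * D ≤ |X ω - μ[X]|} := by
          refine measure_mono fun ω hω => ?_
          simp only [Set.mem_setOf_eq] at hω ⊢
          have harg : (∑ s ∈ range D, (Hi s ω * Yt s ω) ^ 2) / D
              - Kii * ((∑ s ∈ range D, pi s) / D) = (X ω - μ[X]) / D := by
            rw [hXapp ω, hEX]; ring
          rw [harg, abs_div, abs_of_pos hD0] at hω
          exact ((lt_div_iff₀ hD0).1 hω).le
      _ ≤ ENNReal.ofReal (variance X μ / (ε * D) ^ 2) :=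
          meas_ge_le_variance_div_sq hmemX (by positivity)
      _ ≤ ENNReal.ofReal (C / ε ^ 2 * (1 / (D:ℝ))) := by
          refine ENNReal.ofReal_le_ofReal ?_
          calc variance X μ / (ε * D) ^ 2 ≤ ((D:ℝ) * C) / (ε * D) ^ 2 := by
                gcongr
            _ = C / ε ^ 2 * (1 / (D:ℝ)) := by field_simp
  constructor
  · -- convergence in probability implies (∑ p)/D → 1
    intro h
    have haK : Tendsto (fun D : ℕ => Kii * ((∑ s ∈ range D, pi s) / D))
        atTop (𝓝 Kii) := by
      rw [Metric.tendsto_atTop]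
      intro ε hε
      have h1 := key (ε/3) (by positivity)
      have h2 := h (ε/3) (by positivity)
      have hev1 := h1.eventually (gt_mem_nhds (by norm_num : (0:ℝ≥0∞) < 1/2))
      have hev2 := h2.eventually (gt_mem_nhds (by norm_num : (0:ℝ≥0∞) < 1/2))
      obtain ⟨N, hN⟩ := eventually_atTop.1 (hev1.and hev2)
      refine ⟨N, fun D hD => ?_⟩
      rw [Real.dist_eq]
      by_contra hcon
      push_neg at hcon
      set aD := Kii * ((∑ s ∈ range D, pi s) / D) with haD
      have hsub : (Set.univ : Set Ω) ⊆
          {ω | ε/3 < |(∑ s ∈ range D, (Hi s ω * Yt s ω) ^ 2) / D - aD|} ∪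
          {ω | ε/3 < |(∑ s ∈ range D, (Hi s ω * Yt s ω) ^ 2) / D - Kii|} := by
        intro ω _
        by_contra hnot
        simp only [Set.mem_union, Set.mem_setOf_eq, not_or, not_lt] at hnot
        have htri : |aD - Kii| ≤
            |(∑ s ∈ range D, (Hi s ω * Yt s ω) ^ 2) / D - aD| +
            |(∑ s ∈ range D, (Hi s ω * Yt s ω) ^ 2) / D - Kii| := by
          have := abs_sub_le aD ((∑ s ∈ range D, (Hi s ω * Yt s ω) ^ 2) / D) Kii
          calc |aD - Kii| ≤ |aD - (∑ s ∈ range D, (Hi s ω * Yt s ω) ^ 2) / D| +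
              |(∑ s ∈ range D, (Hi s ω * Yt s ω) ^ 2) / D - Kii| := this
            _ = _ := by rw [abs_sub_comm]
        linarith [hnot.1, hnot.2, hcon]
      have hge : (1:ℝ≥0∞) ≤
          μ {ω | ε/3 < |(∑ s ∈ range D, (Hi s ω * Yt s ω) ^ 2) / D - aD|} +
          μ {ω | ε/3 < |(∑ s ∈ range D, (Hi s ω * Yt s ω) ^ 2) / D - Kii|} := by
        calc (1:ℝ≥0∞) = μ Set.univ := (measure_univ (μ := μ)).symm
          _ ≤ μ ({ω | ε/3 < |(∑ s ∈ range D, (Hi s ω * Yt s ω) ^ 2) / D - aD|} ∪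
              {ω | ε/3 < |(∑ s ∈ range D, (Hi s ω * Yt s ω) ^ 2) / D - Kii|}) :=
            measure_mono hsub
          _ ≤ _ := measure_union_le _ _
      have hlt : μ {ω | ε/3 < |(∑ s ∈ range D, (Hi s ω * Yt s ω) ^ 2) / D - aD|} +
          μ {ω | ε/3 < |(∑ s ∈ range D, (Hi s ω * Yt s ω) ^ 2) / D - Kii|}
          < 1 := by
        calc _ < 1/2 + 1/2 := ENNReal.add_lt_add (hN D hD).1 (hN D hD).2
          _ = (1:ℝ≥0∞) := ENNReal.add_halves 1
      exact absurd hge (not_le.2 hlt)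
    have := haK.const_mul Kii⁻¹
    simp only [← mul_assoc, inv_mul_cancel₀ hKii.ne', one_mul] at this
    simpa [inv_mul_cancel₀ hKii.ne'] using this
  · -- (∑ p)/D → 1 implies convergence in probability
    intro hp ε hε
    have haK : Tendsto (fun D : ℕ => Kii * ((∑ s ∈ range D, pi s) / D))
        atTop (𝓝 Kii) := by
      have := hp.const_mul Kii
      simpa using this
    have hev : ∀ᶠ D : ℕ in atTop,
        |Kii * ((∑ s ∈ range D, pi s) / D) - Kii| < ε/2 := by
      have := Metric.tendsto_atTop.1 haK (ε/2) (by positivity)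
      obtain ⟨N, hN⟩ := this
      filter_upwards [eventually_ge_atTop N] with D hD
      have := hN D hD
      rwa [Real.dist_eq] at this
    refine tendsto_of_tendsto_of_tendsto_of_le_of_le' tendsto_const_nhds
      (key (ε/2) (by positivity))
      (Filter.Eventually.of_forall fun _ => zero_le) ?_
    filter_upwards [hev] with D hD
    refine measure_mono fun ω hω => ?_
    simp only [Set.mem_setOf_eq] at hω ⊢
    have htri : |(∑ s ∈ range D, (Hi s ω * Yt s ω) ^ 2) / D - Kii| ≤
        |(∑ s ∈ range D, (Hi s ω * Yt s ω) ^ 2) / D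
          - Kii * ((∑ s ∈ range D, pi s) / D)| +
        |Kii * ((∑ s ∈ range D, pi s) / D) - Kii| :=
      abs_sub_le _ _ _
    linarith
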